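/- arXiv:1405.2542 — 7 statements merged into one kernel-verified Lean document; each statement's English description precedes it below -/
import Mathlib

section
/- Let f : ℝ³ → ℝ be continuously differentiable and let h : ℝ³ → ℝ be a semi-inversion of f with respect to its third argument, i.e. h(t,x,f(t,x,y)) = y for all t,x,y ∈ ℝ. Let g : ℝ³ → ℝ be continuous, let I be an open interval, and let x, y : I → ℝ be differentiable functions satisfying x'(t) = f(t, x(t), y(t)) and y'(t) = g(t, x(t), y(t)) for all t ∈ I. Then (i) y(t) = h(t, x(t), x'(t)) for all t ∈ I, and (ii) x is twice differentiable on I with x''(t) = f_t(t, x(t), h(t,x(t),x'(t))) + x'(t)·f_x(t, x(t), h(t,x(t),x'(t))) + g(t, x(t), h(t,x(t),x'(t)))·f_y(t, x(t), h(t,x(t),x'(t))) for all t ∈ I, where f_t, f_x, f_y denote the partial derivatives of f with respect to its first, second and third arguments. -/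
/-!
Since `ẋ = f(t, x, y)`, applying the semi-inversion gives `y = h(t, x, ẋ)` at once. On the open
interval `ẋ` coincides near each `t` with `s ↦ f(s, x(s), y(s))`, which the chain rule
differentiates to `f_t + ẋ f_x + ẏ f_y`; substituting `ẏ = g` and `y = h(t, x, ẋ)` gives the
folded equation.
-/

open Topology

lemma ContinuousLinearMap.apply_triple (D : ℝ × ℝ × ℝ →L[ℝ] ℝ) (a b c : ℝ) :
    D (a, b, c) = a * D (1, 0, 0) + b * D (0, 1, 0) + c * D (0, 0, 1) := by
  have hsplit : ((a, b, c) : ℝ × ℝ × ℝ)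
      = a • ((1 : ℝ), (0 : ℝ), (0 : ℝ)) + b • ((0 : ℝ), (1 : ℝ), (0 : ℝ))
        + c • ((0 : ℝ), (0 : ℝ), (1 : ℝ)) := by
    simp
  rw [hsplit, map_add, map_add, map_smul, map_smul, map_smul, smul_eq_mul, smul_eq_mul,
    smul_eq_mul]

theorem hasDerivAt_comp_curve {f : ℝ → ℝ → ℝ → ℝ} {x y : ℝ → ℝ} {t x' y' : ℝ}
    (hf : DifferentiableAt ℝ (fun p : ℝ × ℝ × ℝ => f p.1 p.2.1 p.2.2) (t, x t, y t))
    (hx : HasDerivAt x x' t) (hy : HasDerivAt y y' t) :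
    HasDerivAt (fun s => f s (x s) (y s))
      (deriv (fun r => f r (x t) (y t)) t + x' * deriv (fun r => f t r (y t)) (x t)
        + y' * deriv (fun r => f t (x t) r) (y t)) t := by
  set F : ℝ × ℝ × ℝ → ℝ := fun p => f p.1 p.2.1 p.2.2
  set D := fderiv ℝ F (t, x t, y t)
  have hD : HasFDerivAt F D (t, x t, y t) := hf.hasFDerivAt
  have h_t : deriv (fun r => f r (x t) (y t)) t = D (1, 0, 0) :=
    (HasFDerivAt.comp_hasDerivAt (l := F) t hD ((hasDerivAt_id' t).prodMk
      ((hasDerivAt_const t (x t)).prodMk (hasDerivAt_const t (y t))))).deriv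
  have h_x : deriv (fun r => f t r (y t)) (x t) = D (0, 1, 0) :=
    (HasFDerivAt.comp_hasDerivAt (l := F) (x t) hD ((hasDerivAt_const (x t) t).prodMk
      ((hasDerivAt_id' (x t)).prodMk (hasDerivAt_const (x t) (y t))))).deriv
  have h_y : deriv (fun r => f t (x t) r) (y t) = D (0, 0, 1) :=
    (HasFDerivAt.comp_hasDerivAt (l := F) (y t) hD ((hasDerivAt_const (y t) t).prodMk
      ((hasDerivAt_const (y t) (x t)).prodMk (hasDerivAt_id' (y t))))).deriv
  have hcurve := HasFDerivAt.comp_hasDerivAt (l := F) t hD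
    ((hasDerivAt_id' t).prodMk (hx.prodMk hy))
  rwa [D.apply_triple, one_mul, ← h_t, ← h_x, ← h_y] at hcurve

theorem eq_semiInverse_deriv {f h : ℝ → ℝ → ℝ → ℝ} (hsemi : ∀ t x y, h t x (f t x y) = y)
    {x y : ℝ → ℝ} {t : ℝ} (hx : HasDerivAt x (f t (x t) (y t)) t) :
    y t = h t (x t) (deriv x t) := by
  rw [hx.deriv, hsemi]

theorem folding_of_planar_system_general
    (f g h : ℝ → ℝ → ℝ → ℝ)
    (hf : ContDiff ℝ 1 (fun p : ℝ × ℝ × ℝ => f p.1 p.2.1 p.2.2))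
    (hsemi : ∀ t x y, h t x (f t x y) = y)
    (a b : ℝ) (x y : ℝ → ℝ)
    (hx : ∀ t ∈ Set.Ioo a b, HasDerivAt x (f t (x t) (y t)) t)
    (hy : ∀ t ∈ Set.Ioo a b, HasDerivAt y (g t (x t) (y t)) t) :
    (∀ t ∈ Set.Ioo a b, y t = h t (x t) (deriv x t)) ∧
    (∀ t ∈ Set.Ioo a b,
      HasDerivAt (deriv x)
        (deriv (fun r => f r (x t) (h t (x t) (deriv x t))) t
          + deriv x t * deriv (fun r => f t r (h t (x t) (deriv x t))) (x t)
          + g t (x t) (h t (x t) (deriv x t))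
              * deriv (fun r => f t (x t) r) (h t (x t) (deriv x t))) t) := by
  have hyx : ∀ t ∈ Set.Ioo a b, y t = h t (x t) (deriv x t) := fun t ht =>
    eq_semiInverse_deriv hsemi (hx t ht)
  refine ⟨hyx, fun t ht => ?_⟩
  have hderiv_eq : deriv x =ᶠ[𝓝 t] fun s => f s (x s) (y s) := by
    filter_upwards [isOpen_Ioo.mem_nhds ht] with s hs using (hx s hs).deriv
  rw [← hyx t ht, (hx t ht).deriv]
  exact (hasDerivAt_comp_curve (hf.differentiable one_ne_zero _) (hx t ht)
    (hy t ht)).congr_of_eventuallyEq hderiv_eq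

/-- Folding a planar nonautonomous system: if `f` is semi-invertible in its third
argument with semi-inversion `h`, then along any flow `(x, y)` of the system
`ẋ = f(t,x,y)`, `ẏ = g(t,x,y)` on an open interval, one has
`y(t) = h(t, x(t), ẋ(t))` and `x` satisfies the folded second-order equation. -/
theorem folding_of_planar_system
    (f g h : ℝ → ℝ → ℝ → ℝ)
    (hf : ContDiff ℝ 1 (fun p : ℝ × ℝ × ℝ => f p.1 p.2.1 p.2.2))
    (hg : Continuous (fun p : ℝ × ℝ × ℝ => g p.1 p.2.1 p.2.2))
    (hsemi : ∀ t x y, h t x (f t x y) = y)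
    (a b : ℝ) (x y : ℝ → ℝ)
    (hx : ∀ t ∈ Set.Ioo a b, HasDerivAt x (f t (x t) (y t)) t)
    (hy : ∀ t ∈ Set.Ioo a b, HasDerivAt y (g t (x t) (y t)) t) :
    (∀ t ∈ Set.Ioo a b, y t = h t (x t) (deriv x t)) ∧
    (∀ t ∈ Set.Ioo a b,
      HasDerivAt (deriv x)
        (deriv (fun r => f r (x t) (h t (x t) (deriv x t))) t
          + deriv x t * deriv (fun r => f t r (h t (x t) (deriv x t))) (x t)
          + g t (x t) (h t (x t) (deriv x t))
              * deriv (fun r => f t (x t) r) (h t (x t) (deriv x t))) t) :=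
  folding_of_planar_system_general f g h hf hsemi a b x y hx hy
end

section
/- Let f : ℝ³ → ℝ be continuously differentiable with f_y(t,x,y) ≠ 0 for all (t,x,y) ∈ ℝ³ (f_y the partial derivative in the third argument), let h : ℝ³ → ℝ be continuously differentiable and satisfy f(t,x,h(t,x,w)) = w for all t,x,w ∈ ℝ, and let g : ℝ³ → ℝ be continuous. Define φ(t,u,w) = f_t(t,u,h(t,u,w)) + w·f_u(t,u,h(t,u,w)) + g(t,u,h(t,u,w))·f_y(t,u,h(t,u,w)). If s : I → ℝ is twice differentiable on an open interval I and satisfies s''(t) = φ(t, s(t), s'(t)) for all t ∈ I, then the pair x(t) := s(t), y(t) := h(t, s(t), s'(t)) is differentiable on I and solves the system x'(t) = f(t,x(t),y(t)), y'(t) = g(t,x(t),y(t)) on I. -/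
/-!
Since `h` inverts `f` in its last variable, `y(r) := h(r, s r, s' r)` satisfies
`f(r, s r, y r) = s'(r)` identically. Differentiating this identity by the chain rule gives
`s'' = f_t + s' f_x + y' f_y`, while the folded equation gives `s'' = f_t + s' f_x + g f_y`;
as `f_y ≠ 0`, `y' = g`. The first equation is the identity itself: `f(t, s, y) = s'`.
-/

lemma ContinuousLinearMap.apply_prod_prod_eq (D : ℝ × ℝ × ℝ →L[ℝ] ℝ) (u v w : ℝ) :
    D (u, v, w) = u * D (1, 0, 0) + v * D (0, 1, 0) + w * D (0, 0, 1) := by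
  have hdecomp : ((u, v, w) : ℝ × ℝ × ℝ) =
      u • ((1 : ℝ), (0 : ℝ), (0 : ℝ)) + v • ((0 : ℝ), (1 : ℝ), (0 : ℝ))
        + w • ((0 : ℝ), (0 : ℝ), (1 : ℝ)) := by
    simp
  rw [hdecomp]
  simp only [map_add, map_smul, smul_eq_mul]

lemma hasDerivAt_comp₃ {f : ℝ → ℝ → ℝ → ℝ} {a b c : ℝ → ℝ} {a' b' c' t : ℝ}
    (hf : DifferentiableAt ℝ (fun p : ℝ × ℝ × ℝ => f p.1 p.2.1 p.2.2) (a t, b t, c t))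
    (ha : HasDerivAt a a' t) (hb : HasDerivAt b b' t) (hc : HasDerivAt c c' t) :
    HasDerivAt (fun r => f (a r) (b r) (c r))
      (a' * deriv (fun r => f r (b t) (c t)) (a t)
        + b' * deriv (fun r => f (a t) r (c t)) (b t)
        + c' * deriv (fun r => f (a t) (b t) r) (c t)) t := by
  have hD := hf.hasFDerivAt
  set D := fderiv ℝ (fun p : ℝ × ℝ × ℝ => f p.1 p.2.1 p.2.2) (a t, b t, c t)
  have h₁ : deriv (fun r => f r (b t) (c t)) (a t) = D (1, 0, 0) :=
    (hD.comp_hasDerivAt (a t) (f := fun r => (r, b t, c t))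
      ((hasDerivAt_id _).prodMk ((hasDerivAt_const _ _).prodMk (hasDerivAt_const _ _)))).deriv
  have h₂ : deriv (fun r => f (a t) r (c t)) (b t) = D (0, 1, 0) :=
    (hD.comp_hasDerivAt (b t) (f := fun r => (a t, r, c t))
      ((hasDerivAt_const _ _).prodMk ((hasDerivAt_id _).prodMk (hasDerivAt_const _ _)))).deriv
  have h₃ : deriv (fun r => f (a t) (b t) r) (c t) = D (0, 0, 1) :=
    (hD.comp_hasDerivAt (c t) (f := fun r => (a t, b t, r))
      ((hasDerivAt_const _ _).prodMk ((hasDerivAt_const _ _).prodMk (hasDerivAt_id _)))).deriv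
  rw [h₁, h₂, h₃, ← D.apply_prod_prod_eq]
  exact hD.comp_hasDerivAt t (ha.prodMk (hb.prodMk hc))

theorem unfolding_solves_system_general
    (f g h : ℝ → ℝ → ℝ → ℝ)
    (hf : ContDiff ℝ 1 (fun p : ℝ × ℝ × ℝ => f p.1 p.2.1 p.2.2))
    (hfy : ∀ t x y, deriv (fun r => f t x r) y ≠ 0)
    (hh : ContDiff ℝ 1 (fun p : ℝ × ℝ × ℝ => h p.1 p.2.1 p.2.2))
    (hinv : ∀ t x w, f t x (h t x w) = w)
    (a b : ℝ) (s : ℝ → ℝ)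
    (hs : ∀ t ∈ Set.Ioo a b, DifferentiableAt ℝ s t)
    (hs2 : ∀ t ∈ Set.Ioo a b,
      HasDerivAt (deriv s)
        (deriv (fun r => f r (s t) (h t (s t) (deriv s t))) t
          + deriv s t * deriv (fun r => f t r (h t (s t) (deriv s t))) (s t)
          + g t (s t) (h t (s t) (deriv s t))
              * deriv (fun r => f t (s t) r) (h t (s t) (deriv s t))) t) :
    ∀ t ∈ Set.Ioo a b,
      HasDerivAt s (f t (s t) (h t (s t) (deriv s t))) t ∧
      HasDerivAt (fun r => h r (s r) (deriv s r))
        (g t (s t) (h t (s t) (deriv s t))) t := by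
  intro t ht
  have hy : DifferentiableAt ℝ (fun r => h r (s r) (deriv s r)) t :=
    (hh.differentiable one_ne_zero _).comp t
      (differentiableAt_id.prodMk ((hs t ht).prodMk (hs2 t ht).differentiableAt))
  have hchain := hasDerivAt_comp₃ (f := f) (hf.differentiable one_ne_zero _)
    (hasDerivAt_id' t) (hs t ht).hasDerivAt hy.hasDerivAt
  have hinv_along : (fun r => f r (s r) (h r (s r) (deriv s r))) = deriv s :=
    funext fun r => hinv r (s r) (deriv s r)
  rw [hinv_along] at hchain
  have hslope := hchain.unique (hs2 t ht)
  rw [one_mul, add_right_inj] at hslope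
  refine ⟨by rw [hinv]; exact (hs t ht).hasDerivAt, ?_⟩
  rw [← mul_right_cancel₀ (hfy _ _ _) hslope]
  exact hy.hasDerivAt

/-- Unfolding: if `h` is a genuine partial inverse of `f` in its third variable and
`s` solves the folded scalar second-order equation `s̈ = φ(t,s,ṡ)` on an open
interval, then `x := s`, `y := h(t, s, ṡ)` solves the planar system
`ẋ = f(t,x,y)`, `ẏ = g(t,x,y)` there. -/
theorem unfolding_solves_system
    (f g h : ℝ → ℝ → ℝ → ℝ)
    (hf : ContDiff ℝ 1 (fun p : ℝ × ℝ × ℝ => f p.1 p.2.1 p.2.2))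
    (hfy : ∀ t x y, deriv (fun r => f t x r) y ≠ 0)
    (hh : ContDiff ℝ 1 (fun p : ℝ × ℝ × ℝ => h p.1 p.2.1 p.2.2))
    (hinv : ∀ t x w, f t x (h t x w) = w)
    (hg : Continuous (fun p : ℝ × ℝ × ℝ => g p.1 p.2.1 p.2.2))
    (a b : ℝ) (s : ℝ → ℝ)
    (hs : ∀ t ∈ Set.Ioo a b, DifferentiableAt ℝ s t)
    (hs2 : ∀ t ∈ Set.Ioo a b,
      HasDerivAt (deriv s)
        (deriv (fun r => f r (s t) (h t (s t) (deriv s t))) t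
          + deriv s t * deriv (fun r => f t r (h t (s t) (deriv s t))) (s t)
          + g t (s t) (h t (s t) (deriv s t))
              * deriv (fun r => f t (s t) r) (h t (s t) (deriv s t))) t) :
    ∀ t ∈ Set.Ioo a b,
      HasDerivAt s (f t (s t) (h t (s t) (deriv s t))) t ∧
      HasDerivAt (fun r => h r (s r) (deriv s r))
        (g t (s t) (h t (s t) (deriv s t))) t :=
  unfolding_solves_system_general f g h hf hfy hh hinv a b s hs hs2
end

section
/- Let f : ℝ³ → ℝ be continuously differentiable with f_v(t,u,v) ≠ 0 for all (t,u,v) ∈ ℝ³, where f_t, f_u, f_v denote the partial derivatives of f in its first, second and third arguments. Let σ : ℝ² → ℝ be continuous and define g(t,u,v) = [σ(u, f(t,u,v)) − f(t,u,v)·f_u(t,u,v) − f_t(t,u,v)] / f_v(t,u,v). If x, y : I → ℝ are differentiable on an open interval I and satisfy x'(t) = f(t,x(t),y(t)) and y'(t) = g(t,x(t),y(t)) for all t ∈ I, then x is twice differentiable on I and satisfies the autonomous (time-independent) second-order equation x''(t) = σ(x(t), x'(t)) for all t ∈ I. -/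
/-! Along a solution, `ẋ = f(t, x, y)`, so by the chain rule
`ẍ = f_t + ẋ f_u + ẏ f_v = f_t + f f_u + g f_v`, and `g` was chosen exactly so that this
equals `σ(x, f) = σ(x, ẋ)`. -/

section PartialDerivatives

variable {E : Type*} [NormedAddCommGroup E] [NormedSpace ℝ E] {F : ℝ → ℝ → ℝ → E}
  {t u v : ℝ}

theorem deriv_partial_fst_eq_fderiv
    (hF : DifferentiableAt ℝ (fun p : ℝ × ℝ × ℝ => F p.1 p.2.1 p.2.2) (t, u, v)) :
    deriv (fun r => F r u v) t
      = fderiv ℝ (fun p : ℝ × ℝ × ℝ => F p.1 p.2.1 p.2.2) (t, u, v) (1, 0, 0) := by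
  have h := hF.hasFDerivAt.comp_hasDerivAt t
    ((hasDerivAt_id t).prodMk ((hasDerivAt_const t u).prodMk (hasDerivAt_const t v)))
  exact h.deriv

theorem deriv_partial_snd_eq_fderiv
    (hF : DifferentiableAt ℝ (fun p : ℝ × ℝ × ℝ => F p.1 p.2.1 p.2.2) (t, u, v)) :
    deriv (fun r => F t r v) u
      = fderiv ℝ (fun p : ℝ × ℝ × ℝ => F p.1 p.2.1 p.2.2) (t, u, v) (0, 1, 0) := by
  have h := hF.hasFDerivAt.comp_hasDerivAt u
    ((hasDerivAt_const u t).prodMk ((hasDerivAt_id u).prodMk (hasDerivAt_const u v)))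
  exact h.deriv

theorem deriv_partial_thd_eq_fderiv
    (hF : DifferentiableAt ℝ (fun p : ℝ × ℝ × ℝ => F p.1 p.2.1 p.2.2) (t, u, v)) :
    deriv (fun r => F t u r) v
      = fderiv ℝ (fun p : ℝ × ℝ × ℝ => F p.1 p.2.1 p.2.2) (t, u, v) (0, 0, 1) := by
  have h := hF.hasFDerivAt.comp_hasDerivAt v
    ((hasDerivAt_const v t).prodMk ((hasDerivAt_const v u).prodMk (hasDerivAt_id v)))
  exact h.deriv

theorem hasDerivAt_comp_partials {x y : ℝ → ℝ} {x' y' : ℝ}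
    (hF : DifferentiableAt ℝ (fun p : ℝ × ℝ × ℝ => F p.1 p.2.1 p.2.2) (t, x t, y t))
    (hx : HasDerivAt x x' t) (hy : HasDerivAt y y' t) :
    HasDerivAt (fun s => F s (x s) (y s))
      (deriv (fun r => F r (x t) (y t)) t + x' • deriv (fun r => F t r (y t)) (x t)
        + y' • deriv (fun r => F t (x t) r) (y t)) t := by
  have hsplit : ((1 : ℝ), x', y')
      = ((1 : ℝ), (0 : ℝ), (0 : ℝ)) + x' • ((0 : ℝ), (1 : ℝ), (0 : ℝ))
        + y' • ((0 : ℝ), (0 : ℝ), (1 : ℝ)) := by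
    simp
  have hchain := hF.hasFDerivAt.comp_hasDerivAt t ((hasDerivAt_id t).prodMk (hx.prodMk hy))
  rw [hsplit, map_add, map_add, map_smul, map_smul] at hchain
  rwa [deriv_partial_fst_eq_fderiv hF, deriv_partial_snd_eq_fderiv hF,
    deriv_partial_thd_eq_fderiv hF]

end PartialDerivatives

theorem autonomous_folding_general
    (f g : ℝ → ℝ → ℝ → ℝ) (σ : ℝ → ℝ → ℝ)
    (hf : ContDiff ℝ 1 (fun p : ℝ × ℝ × ℝ => f p.1 p.2.1 p.2.2))
    (hfv : ∀ t u v, deriv (fun r => f t u r) v ≠ 0)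
    (hgdef : ∀ t u v, g t u v =
      (σ u (f t u v) - f t u v * deriv (fun r => f t r v) u
        - deriv (fun r => f r u v) t) / deriv (fun r => f t u r) v)
    (a b : ℝ) (x y : ℝ → ℝ)
    (hx : ∀ t ∈ Set.Ioo a b, HasDerivAt x (f t (x t) (y t)) t)
    (hy : ∀ t ∈ Set.Ioo a b, HasDerivAt y (g t (x t) (y t)) t) :
    ∀ t ∈ Set.Ioo a b, HasDerivAt (deriv x) (σ (x t) (deriv x t)) t := by
  intro t ht
  have hchain := hasDerivAt_comp_partials ((hf.differentiable one_ne_zero) _) (hx t ht) (hy t ht)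
  have hσ_eq : deriv (fun r => f r (x t) (y t)) t
      + f t (x t) (y t) * deriv (fun r => f t r (y t)) (x t)
      + g t (x t) (y t) * deriv (fun r => f t (x t) r) (y t) = σ (x t) (f t (x t) (y t)) := by
    rw [hgdef, div_mul_cancel₀ _ (hfv _ _ _)]
    ring
  have hderiv_eq : deriv x =ᶠ[nhds t] fun s => f s (x s) (y s) :=
    Filter.eventually_of_mem (isOpen_Ioo.mem_nhds ht) fun s hs => (hx s hs).deriv
  rw [smul_eq_mul, smul_eq_mul, hσ_eq] at hchain
  rw [(hx t ht).deriv]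
  exact hchain.congr_of_eventuallyEq hderiv_eq

/-- Corollary 2 (quantitative core): with `g = (σ(u,f) − f·f_u − f_t)/f_v`, the
`x`-component of any flow of `ẋ = f(t,x,y)`, `ẏ = g(t,x,y)` satisfies the autonomous
second-order equation `ẍ = σ(x, ẋ)`. -/
theorem autonomous_folding
    (f g : ℝ → ℝ → ℝ → ℝ) (σ : ℝ → ℝ → ℝ)
    (hf : ContDiff ℝ 1 (fun p : ℝ × ℝ × ℝ => f p.1 p.2.1 p.2.2))
    (hfv : ∀ t u v, deriv (fun r => f t u r) v ≠ 0)
    (hσ : Continuous (fun p : ℝ × ℝ => σ p.1 p.2))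
    (hgdef : ∀ t u v, g t u v =
      (σ u (f t u v) - f t u v * deriv (fun r => f t r v) u
        - deriv (fun r => f r u v) t) / deriv (fun r => f t u r) v)
    (a b : ℝ) (x y : ℝ → ℝ)
    (hx : ∀ t ∈ Set.Ioo a b, HasDerivAt x (f t (x t) (y t)) t)
    (hy : ∀ t ∈ Set.Ioo a b, HasDerivAt y (g t (x t) (y t)) t) :
    ∀ t ∈ Set.Ioo a b, HasDerivAt (deriv x) (σ (x t) (deriv x t)) t :=
  autonomous_folding_general f g σ hf hfv hgdef a b x y hx hy
end

section
/- Let f : ℝ³ → ℝ be continuously differentiable with f_v(t,u,v) ≠ 0 for all (t,u,v) ∈ ℝ³, where f_t, f_u, f_v denote the partial derivatives of f in its first, second and third arguments. Let A, B ∈ ℝ, not both zero, let C : ℝ → ℝ be continuous, and define g(t,u,v) = [A·u + (B − f_u(t,u,v))·f(t,u,v) − f_t(t,u,v) + C(t)] / f_v(t,u,v). If x, y : I → ℝ are differentiable on an open interval I and satisfy x'(t) = f(t,x(t),y(t)) and y'(t) = g(t,x(t),y(t)) for all t ∈ I, then x is twice differentiable on I and satisfies the linear nonhomogeneous equation x''(t)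 = A·x(t) + B·x'(t) + C(t) for all t ∈ I. -/
/-! Along a flow, `ẍ = d/dt f(t, x, y) = f_t + f_u ẋ + f_v ẏ`, and substituting `ẏ = g(t, x, y)`
cancels `f_t` and `f_u ẋ` and divides out `f_v`, leaving `A x + B ẋ + C(t)`. -/

open Filter Topology

section PartialDerivatives

variable {f : ℝ → ℝ → ℝ → ℝ} {t u v : ℝ}

theorem hasDerivAt_fst_of_differentiableAt_uncurry
    (hf : DifferentiableAt ℝ (fun p : ℝ × ℝ × ℝ => f p.1 p.2.1 p.2.2) (t, u, v)) :
    HasDerivAt (fun r => f r u v)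
      (fderiv ℝ (fun p : ℝ × ℝ × ℝ => f p.1 p.2.1 p.2.2) (t, u, v) (1, 0, 0)) t := by
  simpa [Function.comp_def] using hf.hasFDerivAt.comp_hasDerivAt t
    ((hasDerivAt_id t).prodMk ((hasDerivAt_const t u).prodMk (hasDerivAt_const t v)))

theorem hasDerivAt_snd_of_differentiableAt_uncurry
    (hf : DifferentiableAt ℝ (fun p : ℝ × ℝ × ℝ => f p.1 p.2.1 p.2.2) (t, u, v)) :
    HasDerivAt (fun r => f t r v)
      (fderiv ℝ (fun p : ℝ × ℝ × ℝ => f p.1 p.2.1 p.2.2) (t, u, v) (0, 1, 0)) u := by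
  simpa [Function.comp_def] using hf.hasFDerivAt.comp_hasDerivAt u
    ((hasDerivAt_const u t).prodMk ((hasDerivAt_id u).prodMk (hasDerivAt_const u v)))

theorem hasDerivAt_thd_of_differentiableAt_uncurry
    (hf : DifferentiableAt ℝ (fun p : ℝ × ℝ × ℝ => f p.1 p.2.1 p.2.2) (t, u, v)) :
    HasDerivAt (fun r => f t u r)
      (fderiv ℝ (fun p : ℝ × ℝ × ℝ => f p.1 p.2.1 p.2.2) (t, u, v) (0, 0, 1)) v := by
  simpa [Function.comp_def] using hf.hasFDerivAt.comp_hasDerivAt v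
    ((hasDerivAt_const v t).prodMk ((hasDerivAt_const v u).prodMk (hasDerivAt_id v)))

theorem ContinuousLinearMap.apply_prod_prod (L : ℝ × ℝ × ℝ →L[ℝ] ℝ) (a b c : ℝ) :
    L (a, b, c) = a * L (1, 0, 0) + b * L (0, 1, 0) + c * L (0, 0, 1) := by
  have : ((a, b, c) : ℝ × ℝ × ℝ) = a • (1, 0, 0) + b • (0, 1, 0) + c • (0, 0, 1) := by
    simp
  rw [this]
  simp only [map_add, map_smul, smul_eq_mul]

theorem hasDerivAt_uncurry₃_comp_curve {x y : ℝ → ℝ} {x' y' : ℝ}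
    (hf : DifferentiableAt ℝ (fun p : ℝ × ℝ × ℝ => f p.1 p.2.1 p.2.2) (t, x t, y t))
    (hx : HasDerivAt x x' t) (hy : HasDerivAt y y' t) :
    HasDerivAt (fun s => f s (x s) (y s))
      (deriv (fun r => f r (x t) (y t)) t + x' * deriv (fun r => f t r (y t)) (x t)
        + y' * deriv (fun r => f t (x t) r) (y t)) t := by
  have hcurve := hf.hasFDerivAt.comp_hasDerivAt t ((hasDerivAt_id t).prodMk (hx.prodMk hy))
  rw [ContinuousLinearMap.apply_prod_prod, one_mul] at hcurve
  rw [(hasDerivAt_fst_of_differentiableAt_uncurry hf).deriv,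
    (hasDerivAt_snd_of_differentiableAt_uncurry hf).deriv,
    (hasDerivAt_thd_of_differentiableAt_uncurry hf).deriv]
  exact hcurve

end PartialDerivatives

theorem linear_folding_general
    (f g : ℝ → ℝ → ℝ → ℝ) (A B : ℝ) (C : ℝ → ℝ)
    (hf : ContDiff ℝ 1 (fun p : ℝ × ℝ × ℝ => f p.1 p.2.1 p.2.2))
    (hfv : ∀ t u v, deriv (fun r => f t u r) v ≠ 0)
    (hgdef : ∀ t u v, g t u v =
      (A * u + (B - deriv (fun r => f t r v) u) * f t u v
        - deriv (fun r => f r u v) t + C t) / deriv (fun r => f t u r) v)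
    (a b : ℝ) (x y : ℝ → ℝ)
    (hx : ∀ t ∈ Set.Ioo a b, HasDerivAt x (f t (x t) (y t)) t)
    (hy : ∀ t ∈ Set.Ioo a b, HasDerivAt y (g t (x t) (y t)) t) :
    ∀ t ∈ Set.Ioo a b,
      HasDerivAt (deriv x) (A * x t + B * deriv x t + C t) t := by
  intro t ht
  have hderiv_x : deriv x =ᶠ[𝓝 t] fun s => f s (x s) (y s) := by
    filter_upwards [isOpen_Ioo.mem_nhds ht] with s hs using (hx s hs).deriv
  have hchain :=
    hasDerivAt_uncurry₃_comp_curve (hf.differentiable one_ne_zero _) (hx t ht) (hy t ht)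
  rw [hgdef, div_mul_cancel₀ _ (hfv _ _ _), ← (hx t ht).deriv] at hchain
  exact (hchain.congr_deriv (by ring)).congr_of_eventuallyEq hderiv_x

/-- Corollary 3 (quantitative core): with
`g = (A·u + (B − f_u)·f − f_t + C(t))/f_v`, the `x`-component of any flow of
`ẋ = f(t,x,y)`, `ẏ = g(t,x,y)` satisfies the linear nonhomogeneous equation
`ẍ = A·x + B·ẋ + C(t)`. -/
theorem linear_folding
    (f g : ℝ → ℝ → ℝ → ℝ) (A B : ℝ) (C : ℝ → ℝ)
    (hf : ContDiff ℝ 1 (fun p : ℝ × ℝ × ℝ => f p.1 p.2.1 p.2.2))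
    (hfv : ∀ t u v, deriv (fun r => f t u r) v ≠ 0)
    (hAB : A ≠ 0 ∨ B ≠ 0)
    (hC : Continuous C)
    (hgdef : ∀ t u v, g t u v =
      (A * u + (B - deriv (fun r => f t r v) u) * f t u v
        - deriv (fun r => f r u v) t + C t) / deriv (fun r => f t u r) v)
    (a b : ℝ) (x y : ℝ → ℝ)
    (hx : ∀ t ∈ Set.Ioo a b, HasDerivAt x (f t (x t) (y t)) t)
    (hy : ∀ t ∈ Set.Ioo a b, HasDerivAt y (g t (x t) (y t)) t) :
    ∀ t ∈ Set.Ioo a b,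
      HasDerivAt (deriv x) (A * x t + B * deriv x t + C t) t :=
  linear_folding_general f g A B C hf hfv hgdef a b x y hx hy
end

section
/- Let a, b, c ∈ ℝ with a, b, c ≠ 0, and let x, y : ℝ → ℝ be differentiable functions satisfying x'(t) = x(t)² + e^{a sin(bt)} y(t) + c and y'(t) = −2 e^{−a sin(bt)} x(t)³ − 2 x(t) y(t) − a b y(t) cos(bt) for all t ∈ ℝ. Then x is twice differentiable with x''(t) = 2c·x(t) for all t ∈ ℝ, and y(t) = e^{−a sin(bt)} (x'(t) − x(t)² − c) for all t ∈ ℝ. -/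
open Real

/-- The illustrative system (des1): flows of
`ẋ = x² + e^{a sin bt} y + c`, `ẏ = −2e^{−a sin bt} x³ − 2xy − ab y cos bt`
fold to `ẍ = 2cx` with passive equation `y = e^{−a sin bt}(ẋ − x² − c)`. -/
theorem example_system_folds
    (a b c : ℝ) (ha : a ≠ 0) (hb : b ≠ 0) (hc : c ≠ 0)
    (x y : ℝ → ℝ)
    (hx : ∀ t, HasDerivAt x (x t ^ 2 + Real.exp (a * Real.sin (b * t)) * y t + c) t)
    (hy : ∀ t, HasDerivAt y
      (-2 * Real.exp (-(a * Real.sin (b * t))) * x t ^ 3 - 2 * x t * y t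
        - a * b * y t * Real.cos (b * t)) t) :
    (∀ t, HasDerivAt (deriv x) (2 * c * x t) t) ∧
    (∀ t, y t = Real.exp (-(a * Real.sin (b * t))) * (deriv x t - x t ^ 2 - c)) := by
  have hd : deriv x = fun t => x t ^ 2 + Real.exp (a * Real.sin (b * t)) * y t + c := by
    funext t; exact (hx t).deriv
  constructor
  · intro t
    have hsin : HasDerivAt (fun s => a * Real.sin (b * s)) (a * (Real.cos (b * t) * b)) t := by
      have hb' : HasDerivAt (fun s : ℝ => b * s) b t := by
        simpa using (hasDerivAt_id t).const_mul b
      have := (Real.hasDerivAt_sin (b * t)).comp t hb'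
      simpa [mul_assoc] using this.const_mul a
    have hexp : HasDerivAt (fun s => Real.exp (a * Real.sin (b * s)))
        (Real.exp (a * Real.sin (b * t)) * (a * (Real.cos (b * t) * b))) t := hsin.exp
    have hmain : HasDerivAt (fun s => x s ^ 2 + Real.exp (a * Real.sin (b * s)) * y s + c)
        ((2 * x t ^ 1 * (x t ^ 2 + Real.exp (a * Real.sin (b * t)) * y t + c)
          + (Real.exp (a * Real.sin (b * t)) * (a * (Real.cos (b * t) * b)) * y t
            + Real.exp (a * Real.sin (b * t)) *
              (-2 * Real.exp (-(a * Real.sin (b * t))) * x t ^ 3 - 2 * x t * y t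
                - a * b * y t * Real.cos (b * t))))) t :=
      (((hx t).pow 2).add (hexp.mul (hy t))).add_const c
    rw [hd]
    convert hmain using 1
    have hE : Real.exp (a * Real.sin (b * t)) * Real.exp (-(a * Real.sin (b * t))) = 1 := by
      rw [← Real.exp_add]; simp
    linear_combination 2 * x t ^ 3 * hE
  · intro t
    rw [hd]
    have hE : Real.exp (-(a * Real.sin (b * t))) * Real.exp (a * Real.sin (b * t)) = 1 := by
      rw [← Real.exp_add]; simp
    have : Real.exp (-(a * Real.sin (b * t))) *
        (x t ^ 2 + Real.exp (a * Real.sin (b * t)) * y t + c - x t ^ 2 - c)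
        = (Real.exp (-(a * Real.sin (b * t))) * Real.exp (a * Real.sin (b * t))) * y t := by
      ring
    rw [this, hE, one_mul]
end

section
/- Let a, b, c ∈ ℝ with a, b, c ≠ 0, let x₀, y₀ ∈ ℝ, and let s : ℝ → ℝ be a twice differentiable solution of the initial value problem s''(t) = 2c·s(t), s(0) = x₀, s'(0) = x₀² + y₀ + c. Define y(t) = e^{−a sin(bt)} (s'(t) − s(t)² − c). Then y is differentiable, (x,y) := (s,y) satisfies x'(t) = x(t)² + e^{a sin(bt)} y(t) + c and y'(t) = −2 e^{−a sin(bt)} x(t)³ − 2 x(t) y(t) − a b y(t) cos(bt) for all t ∈ ℝ, and (x(0), y(0)) = (x₀, y₀). -/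
/-! Write `φ t = a sin bt`. For the passive equation `y = e^{-φ}(ṡ - s² - c)`, the first
equation of the system is that definition read backwards; differentiating it, `s̈ = 2cs` and
the first equation make the `c`-terms cancel, which leaves the second equation. -/

open Real

section Passive

variable {c : ℝ} {s φ y : ℝ → ℝ}

theorem deriv_eq_of_passive (hy : ∀ t, y t = exp (-φ t) * (deriv s t - s t ^ 2 - c)) (t : ℝ) :
    deriv s t = s t ^ 2 + exp (φ t) * y t + c := by
  rw [hy, ← mul_assoc, ← exp_add, add_neg_cancel, exp_zero, one_mul]
  ring

theorem hasDerivAt_passive {φ' t : ℝ} (hφ : HasDerivAt φ φ' t) (hs : DifferentiableAt ℝ s t)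
    (hs2 : HasDerivAt (deriv s) (2 * c * s t) t)
    (hy : ∀ t, y t = exp (-φ t) * (deriv s t - s t ^ 2 - c)) :
    HasDerivAt y (-2 * exp (-φ t) * s t ^ 3 - 2 * s t * y t - φ' * y t) t := by
  have hG : HasDerivAt (fun t => deriv s t - s t ^ 2 - c)
      (2 * c * s t - 2 * s t * deriv s t) t := by
    refine ((hs2.sub (hs.hasDerivAt.pow 2)).sub_const c).congr_deriv ?_
    simp only [Nat.cast_ofNat]
    ring
  refine ((hφ.neg.exp.mul hG).congr_of_eventuallyEq (.of_forall hy)).congr_deriv ?_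
  rw [Pi.neg_apply, hy t]
  ring

end Passive

theorem hasDerivAt_const_mul_sin_const_mul (a b t : ℝ) :
    HasDerivAt (fun t => a * sin (b * t)) (a * b * cos (b * t)) t := by
  refine (((hasDerivAt_id t).const_mul b).sin.const_mul a).congr_deriv ?_
  simp only [id, mul_one]
  ring

theorem example_system_unfolds_general
    (a b c : ℝ)
    (x₀ y₀ : ℝ) (s : ℝ → ℝ)
    (hs : Differentiable ℝ s)
    (hs2 : ∀ t, HasDerivAt (deriv s) (2 * c * s t) t)
    (hinit : s 0 = x₀) (hinit' : deriv s 0 = x₀ ^ 2 + y₀ + c)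
    (y : ℝ → ℝ)
    (hydef : ∀ t, y t = Real.exp (-(a * Real.sin (b * t))) * (deriv s t - s t ^ 2 - c)) :
    (∀ t, HasDerivAt s (s t ^ 2 + Real.exp (a * Real.sin (b * t)) * y t + c) t) ∧
    (∀ t, HasDerivAt y
      (-2 * Real.exp (-(a * Real.sin (b * t))) * s t ^ 3 - 2 * s t * y t
        - a * b * y t * Real.cos (b * t)) t) ∧
    s 0 = x₀ ∧ y 0 = y₀ := by
  refine ⟨fun t => ?_, fun t => ?_, hinit, ?_⟩
  · exact deriv_eq_of_passive (φ := fun t => a * sin (b * t)) hydef t ▸ (hs t).hasDerivAt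
  · convert hasDerivAt_passive (hasDerivAt_const_mul_sin_const_mul a b t) (hs t) (hs2 t) hydef
      using 1
    ring
  · rw [hydef, hinit', hinit]
    simp only [mul_zero, sin_zero, neg_zero, exp_zero, one_mul]
    ring

/-- Solving the folded initial value problem `s̈ = 2cs`, `s(0) = x₀`,
`ṡ(0) = x₀² + y₀ + c` and evaluating the passive equation
`y = e^{−a sin bt}(ṡ − s² − c)` produces a flow of the system (des1) through
the initial point `(x₀, y₀)`. -/
theorem example_system_unfolds
    (a b c : ℝ) (ha : a ≠ 0) (hb : b ≠ 0) (hc : c ≠ 0)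
    (x₀ y₀ : ℝ) (s : ℝ → ℝ)
    (hs : Differentiable ℝ s)
    (hs2 : ∀ t, HasDerivAt (deriv s) (2 * c * s t) t)
    (hinit : s 0 = x₀) (hinit' : deriv s 0 = x₀ ^ 2 + y₀ + c)
    (y : ℝ → ℝ)
    (hydef : ∀ t, y t = Real.exp (-(a * Real.sin (b * t))) * (deriv s t - s t ^ 2 - c)) :
    (∀ t, HasDerivAt s (s t ^ 2 + Real.exp (a * Real.sin (b * t)) * y t + c) t) ∧
    (∀ t, HasDerivAt y
      (-2 * Real.exp (-(a * Real.sin (b * t))) * s t ^ 3 - 2 * s t * y t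
        - a * b * y t * Real.cos (b * t)) t) ∧
    s 0 = x₀ ∧ y 0 = y₀ :=
  example_system_unfolds_general a b c x₀ y₀ s hs hs2 hinit hinit' y hydef
end

section
/- Let a ∈ ℝ, b, c > 0, K ∈ ℝ, and set δ(t) = K·e^{−ct}. If x, y : ℝ → ℝ are differentiable and satisfy x'(t) = x(t) + y(t) + δ(t) and y'(t) = a·x(t) − b·x(t)³ − c·y(t) for all t ∈ ℝ, then x is twice differentiable and satisfies the autonomous second-order equation x''(t) + (c−1)·x'(t) − (a+c)·x(t) + b·x(t)³ = 0 for all t ∈ ℝ. -/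
/-- With `δ(t) = Ke^{−ct}`, flows of `ẋ = x + y + δ(t)`, `ẏ = ax − bx³ − cy`
fold to the autonomous unforced Duffing equation
`ẍ + (c−1)ẋ − (a+c)x + bx³ = 0`. -/
theorem duffing_unforced_fold
    (a b c K : ℝ) (hb : 0 < b) (hc : 0 < c)
    (x y : ℝ → ℝ)
    (hx : ∀ t, HasDerivAt x (x t + y t + K * Real.exp (-c * t)) t)
    (hy : ∀ t, HasDerivAt y (a * x t - b * x t ^ 3 - c * y t) t) :
    (∀ t, DifferentiableAt ℝ (deriv x) t) ∧
    (∀ t, deriv (deriv x) t + (c - 1) * deriv x t - (a + c) * x t + b * x t ^ 3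
      = 0) := by
  have hd : deriv x = fun t => x t + y t + K * Real.exp (-c * t) := by
    funext t; exact (hx t).deriv
  have hderiv : ∀ t, HasDerivAt (deriv x)
      ((x t + y t + K * Real.exp (-c * t)) + (a * x t - b * x t ^ 3 - c * y t)
        + K * (Real.exp (-c * t) * (-c))) t := by
    intro t
    rw [hd]
    have he : HasDerivAt (fun t => K * Real.exp (-c * t))
        (K * (Real.exp (-c * t) * (-c))) t := by
      have : HasDerivAt (fun t : ℝ => Real.exp (-c * t))
          (Real.exp (-c * t) * (-c)) t := by
        have h1 : HasDerivAt (fun t : ℝ => -c * t) (-c) t := by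
          simpa using (hasDerivAt_id t).const_mul (-c)
        exact h1.exp
      exact this.const_mul K
    exact ((hx t).add (hy t)).add he
  refine ⟨fun t => (hderiv t).differentiableAt, fun t => ?_⟩
  rw [(hderiv t).deriv, hd]
  ring
end
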